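/- arXiv:1709.01843 — 3 statements merged into one kernel-verified Lean document; each statement's English description precedes it below -/
import Mathlib

section
/- Let Ξ̃ ⊂ ℝ^d be an open convex set whose characteristic cone cc_{Ξ̃} has nonempty interior. Let Ξ ⊂ ℝ^d be an open connected set such that x₁ + Ξ̃ ⊂ Ξ ⊂ x₀ + Ξ̃ for some points x₀, x₁ ∈ ℝ^d. Then Ξ − Ξ = ℝ^d. -/
open MeasureTheory Set Pointwise
open scoped ENNReal

noncomputable section

abbrev Ed (d : ℕ) := EuclideanSpace ℝ (Fin d)

def charCone {d : ℕ} (Ω : Set (Ed d)) : Set (Ed d) :=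
  {x | ∀ t : ℝ, 0 < t → ∀ p ∈ Ω, p + t • x ∈ Ω}

/-! If `v` is interior to the characteristic cone of `Ξ̃`, then so is `v + z / t` for `t` large,
hence `t v + z` lies in the cone as well. Starting from any `q ∈ Ξ̃`, both `q + t v` and
`q + t v + z` lie in `Ξ̃`, so `Ξ̃ - Ξ̃ = ℝ^d`; and `Ξ` contains a translate of `Ξ̃`. -/

open Filter Topology

theorem exists_pos_smul_add_mem_of_mem_interior {E : Type*} [AddCommGroup E] [Module ℝ E]
    [TopologicalSpace E] [ContinuousAdd E] [ContinuousSMul ℝ E] {C : Set E}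
    (hC : ∀ s : ℝ, 0 < s → ∀ x ∈ C, s • x ∈ C) {v : E} (hv : v ∈ interior C) (z : E) :
    ∃ t : ℝ, 0 < t ∧ t • v + z ∈ C := by
  have hlim : Tendsto (fun t : ℝ ↦ v + t⁻¹ • z) atTop (𝓝 v) := by
    simpa using ((tendsto_inv_atTop_zero (𝕜 := ℝ)).smul_const z).const_add v
  obtain ⟨t, ht, hmem⟩ :=
    ((eventually_gt_atTop 0).and (hlim.eventually (mem_interior_iff_mem_nhds.mp hv))).exists
  refine ⟨t, ht, ?_⟩
  simpa [smul_add, smul_smul, ht.ne'] using hC t ht _ hmem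

section CharCone

variable {d : ℕ} {Ω : Set (Ed d)}

theorem smul_mem_charCone {s : ℝ} (hs : 0 < s) {x : Ed d} (hx : x ∈ charCone Ω) :
    s • x ∈ charCone Ω := fun t ht p hp ↦ by
  simpa [smul_smul] using hx (t * s) (mul_pos ht hs) p hp

theorem add_mem_of_mem_charCone {p x : Ed d} (hp : p ∈ Ω) (hx : x ∈ charCone Ω) : p + x ∈ Ω := by
  simpa using hx 1 one_pos p hp

theorem sub_self_eq_univ_of_interior_charCone_nonempty (hΩ : Ω.Nonempty)
    (hcc : (interior (charCone Ω)).Nonempty) : Ω - Ω = univ := by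
  obtain ⟨v, hv⟩ := hcc
  obtain ⟨q, hq⟩ := hΩ
  refine eq_univ_of_forall fun z ↦ ?_
  obtain ⟨t, ht, htz⟩ :=
    exists_pos_smul_add_mem_of_mem_interior (fun s hs x hx ↦ smul_mem_charCone hs hx) hv z
  have htv : t • v ∈ charCone Ω := smul_mem_charCone ht (interior_subset hv)
  exact ⟨q + (t • v + z), add_mem_of_mem_charCone hq htz, q + t • v,
    add_mem_of_mem_charCone hq htv, by simp⟩

end CharCone

theorem stmt4_general {d : ℕ} (Ξt Ξ : Set (Ed d))
    (hcc : (interior (charCone Ξt)).Nonempty)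
    (hΞc : IsConnected Ξ)
    (x₀ x₁ : Ed d) (h1 : x₁ +ᵥ Ξt ⊆ Ξ) (h0 : Ξ ⊆ x₀ +ᵥ Ξt) :
    Ξ - Ξ = (univ : Set (Ed d)) := by
  have hΞt : Ξt.Nonempty := vadd_set_nonempty.mp (hΞc.nonempty.mono h0)
  refine eq_univ_of_forall fun z ↦ ?_
  obtain ⟨a, ha, b, hb, rfl⟩ : z ∈ Ξt - Ξt := by
    rw [sub_self_eq_univ_of_interior_charCone_nonempty hΞt hcc]; trivial
  exact ⟨x₁ + a, h1 (vadd_mem_vadd_set ha), x₁ + b, h1 (vadd_mem_vadd_set hb), add_sub_add_left_eq_sub a b x₁⟩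

/-- if `Ξ̃` is open convex with recession cone having nonempty interior and
`x₁ + Ξ̃ ⊆ Ξ ⊆ x₀ + Ξ̃`, then `Ξ − Ξ = ℝ^d`. -/
theorem stmt4 {d : ℕ} (Ξt Ξ : Set (Ed d))
    (hconv : Convex ℝ Ξt) (hopen : IsOpen Ξt)
    (hcc : (interior (charCone Ξt)).Nonempty)
    (hΞo : IsOpen Ξ) (hΞc : IsConnected Ξ)
    (x₀ x₁ : Ed d) (h1 : x₁ +ᵥ Ξt ⊆ Ξ) (h0 : Ξ ⊆ x₀ +ᵥ Ξt) :
    Ξ - Ξ = (univ : Set (Ed d)) :=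
  stmt4_general Ξt Ξ hcc hΞc x₀ x₁ h1 h0
end
end

section
/- Let Ξ be a simple convex polytope in ℝ^d such that Ξ + z = −Ξ − z for some z ∈ ℝ^d, and let f be a distribution on Ω = Ξ − Ξ. Define f̃(x) = f(x + 2z) for x ∈ 2Ξ and, for g on Ξ, g̃(x) = g(−x − 2z). Then the Toeplitz operator Θ_{f,Ξ} satisfies Θ_f(g) = Γ_{f̃,Ξ}(g̃) for test functions g; consequently ‖Θ_{f,Ξ}‖ = ‖Γ_{f̃,Ξ}‖. -/
open MeasureTheory Complex Set Pointwise
open scoped ENNReal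

noncomputable section

def IsTestFun {d : ℕ} (Ω : Set (Ed d)) (φ : Ed d → ℂ) : Prop :=
  ContDiff ℝ (⊤ : ℕ∞) φ ∧ HasCompactSupport φ ∧ tsupport φ ⊆ Ω

def sqInt {d : ℕ} (Ξ : Set (Ed d)) (g : Ed d → ℂ) : ℝ≥0∞ :=
  ∫⁻ x in Ξ, (‖g x‖₊ : ℝ≥0∞) ^ 2

def Psi {d : ℕ} (f : (Ed d → ℂ) → ℂ) (φ : Ed d → ℂ) (x : Ed d) : ℂ :=
  f (fun y => φ (y - x))

def PsiNorm {d : ℕ} (f : (Ed d → ℂ) → ℂ) (Υ Ξ : Set (Ed d)) : ℝ≥0∞ :=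
  sInf {C : ℝ≥0∞ | ∀ φ, IsTestFun Υ φ → sqInt Ξ (Psi f φ) ≤ C ^ 2 * sqInt Υ φ}

def Theta {d : ℕ} (f : (Ed d → ℂ) → ℂ) (g : Ed d → ℂ) (x : Ed d) : ℂ :=
  f (fun w => g (x - w))

def ThetaNorm {d : ℕ} (f : (Ed d → ℂ) → ℂ) (Ξ : Set (Ed d)) : ℝ≥0∞ :=
  sInf {C : ℝ≥0∞ | ∀ g, IsTestFun Ξ g → sqInt Ξ (Theta f g) ≤ C ^ 2 * sqInt Ξ g}

def IsFaceDim {d : ℕ} (P F : Set (Ed d)) (k : ℕ) : Prop :=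
  F.Nonempty ∧ Convex ℝ F ∧ IsExtreme ℝ P F ∧
    Module.finrank ℝ (affineSpan ℝ F).direction = k

/-- `Ξ` is an open simple convex polytope: the interior of the convex hull of finitely many
points, nonempty, each vertex lying on exactly `d` edges. -/
def IsSimpleConvexPolytope {d : ℕ} (Ξ : Set (Ed d)) : Prop :=
  ∃ V : Finset (Ed d), Ξ = interior (convexHull ℝ (V : Set (Ed d))) ∧ Ξ.Nonempty ∧
    ∀ x ∈ Set.extremePoints ℝ (convexHull ℝ (V : Set (Ed d))),
      Set.ncard {F : Set (Ed d) |
        IsFaceDim (convexHull ℝ (V : Set (Ed d))) F 1 ∧ x ∈ F} = d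

/-- if `Ξ + z = −Ξ − z` then with `f̃(x) = f(x + 2z)` and `g̃(x) = g(−x − 2z)`,
one has `Θ_f(g) = Γ_{f̃}(g̃)` and consequently `‖Θ_{f,Ξ}‖ = ‖Γ_{f̃,Ξ}‖`. -/
theorem stmt13 {d : ℕ} (Ξ : Set (Ed d)) (hΞ : IsSimpleConvexPolytope Ξ)
    (z : Ed d) (hsym : z +ᵥ Ξ = -(z +ᵥ Ξ))
    (f : (Ed d → ℂ) → ℂ) (hlin : IsLinearMap ℂ f) :
    (∀ (g : Ed d → ℂ) (x : Ed d),
      Theta f g x = Psi (fun φ => f (fun w => φ (w - (z + z))))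
        (fun w => g (-w - (z + z))) x) ∧
    ThetaNorm f Ξ = PsiNorm (fun φ => f (fun w => φ (w - (z + z)))) Ξ Ξ := by
  classical
  set c : Ed d := z + z with hc
  -- the involution T x = -x - c
  set T : Ed d → Ed d := fun x => -x - c with hT
  have hTinv : Function.Involutive T := by
    intro x; simp only [hT]; abel
  -- membership symmetry
  have hmem1 : ∀ x : Ed d, x ∈ Ξ → T x ∈ Ξ := by
    intro x hx
    have h1 : z + x ∈ z +ᵥ Ξ := ⟨x, hx, rfl⟩
    rw [hsym, Set.mem_neg] at h1
    rcases h1 with ⟨y, hy, hy2⟩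
    have : y = T x := by
      simp only [hT, hc]
      have := hy2
      simp only [vadd_eq_add] at this
      have : y = -(z + x) - z := by
        have := congrArg (fun t => t - z) this
        simpa [add_sub_cancel_right] using this
      rw [this]; abel
    rwa [← this]
  have hmem : ∀ x : Ed d, T x ∈ Ξ ↔ x ∈ Ξ := by
    intro x
    constructor
    · intro h; have := hmem1 _ h; rwa [hTinv x] at this
    · exact hmem1 x
  have hpre : T ⁻¹' Ξ = Ξ := by ext x; exact hmem x
  -- pointwise identity
  have hpt : ∀ (g : Ed d → ℂ) (x : Ed d),
      Theta f g x = Psi (fun φ => f (fun w => φ (w - c)))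
        (fun w => g (-w - c)) x := by
    intro g x
    simp only [Theta, Psi]
    congr 1
    funext w
    congr 1
    abel
  have hinv : ∀ g : Ed d → ℂ, (fun x => (fun w => g (-w - c)) (-x - c)) = g := by
    intro g; funext x; simp only; congr 1; abel
  -- continuity / smoothness of T
  have hTcd : ContDiff ℝ (⊤ : ℕ∞) T := (contDiff_id.neg).sub contDiff_const
  have hTcont : Continuous T := hTcd.continuous
  -- homeomorphism
  let e : Ed d ≃ₜ Ed d :=
    { toEquiv := hTinv.toPerm, continuous_toFun := hTcont, continuous_invFun := hTcont }
  have he : ∀ x, e x = T x := fun _ => rfl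
  -- test function preservation
  have htest : ∀ g : Ed d → ℂ, IsTestFun Ξ g → IsTestFun Ξ (fun x => g (-x - c)) := by
    intro g hg
    obtain ⟨hg1, hg2, hg3⟩ := hg
    have hcomp : (fun x => g (-x - c)) = g ∘ T := rfl
    have hts : tsupport (g ∘ T) = T ⁻¹' tsupport g := by
      rw [tsupport, Function.support_comp_eq_preimage]
      have : T ⁻¹' Function.support g = e ⁻¹' Function.support g := rfl
      rw [this, ← e.preimage_closure]
      rfl
    refine ⟨hg1.comp hTcd, ?_, ?_⟩
    · rw [HasCompactSupport, hcomp, hts]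
      have : T ⁻¹' tsupport g = e ⁻¹' tsupport g := rfl
      rw [this, e.isCompact_preimage]
      exact hg2
    · rw [hcomp, hts, ← hpre]
      exact Set.preimage_mono hg3
  -- measure preservation
  have hmp : MeasurePreserving T volume volume := by
    have h1 : MeasurePreserving (fun x : Ed d => x + c) volume volume :=
      measurePreserving_add_right volume c
    have h2 : MeasurePreserving (fun x : Ed d => -x) volume volume :=
      Measure.measurePreserving_neg volume
    have : T = (fun x : Ed d => -x) ∘ (fun x : Ed d => x + c) := by
      funext x; simp only [hT, Function.comp_apply]; abel
    rw [this]
    exact h2.comp h1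
  have hemb : MeasurableEmbedding T := e.toMeasurableEquiv.measurableEmbedding
  have hsq : ∀ g : Ed d → ℂ, sqInt Ξ (fun x => g (-x - c)) = sqInt Ξ g := by
    intro g
    have := hmp.setLIntegral_comp_preimage_emb hemb (fun y => (‖g y‖₊ : ℝ≥0∞) ^ 2) Ξ
    rw [hpre] at this
    exact this
  have hfun : ∀ φ : Ed d → ℂ,
      Theta f (fun x => φ (-x - c)) = Psi (fun ψ => f (fun w => ψ (w - c))) φ := by
    intro φ; funext x
    simp only [Theta, Psi]
    congr 1; funext w; congr 1; abel
  constructor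
  · exact hpt
  · unfold ThetaNorm PsiNorm
    congr 1
    ext C
    simp only [Set.mem_setOf_eq]
    constructor
    · intro h φ hφ
      have hineq := h (fun x => φ (-x - c)) (htest φ hφ)
      rw [hfun φ, hsq φ] at hineq
      exact hineq
    · intro h g hg
      have hineq := h (fun x => g (-x - c)) (htest g hg)
      have heq : sqInt Ξ (Theta f g)
          = sqInt Ξ (Psi (fun ψ => f (fun w => ψ (w - c))) (fun x => g (-x - c))) := by
        unfold sqInt
        congr 1
        funext x
        rw [hpt g x]
      rw [heq, ← hsq g]
      exact hineq
end
end

section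
/- Fix N ∈ ℕ and a multi-sequence a = (a_n)_{n ∈ {−N+1,…,N−1}^d} of complex numbers. Let f = Σ_n a_n δ_n be the corresponding sum of Dirac deltas, and let Ξ = (0,N)^d. Then the Toeplitz operator Θ_{f,Ξ} : L²(Ξ) → L²(Ξ) satisfies ‖Θ_{f,Ξ}‖ ≤ ‖T_a‖, where T_a is the d-level block Toeplitz matrix acting on ℓ²({0,…,N−1}^d) by T_a(v)(m) = Σ_{n ∈ {0,…,N−1}^d} a_{m−n} v_n. -/
open MeasureTheory Complex Set
open scoped ENNReal

noncomputable section

/-- The lattice point `n ∈ ℤ^d` as a point of `ℝ^d`. -/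
def latZ {d : ℕ} (n : Fin d → ℤ) : Ed d := WithLp.toLp 2 (fun i => (n i : ℝ) : Fin d → ℝ)

/-- for a multi-sequence `a` supported in `{−N+1,…,N−1}^d`, with
`f = Σ aₙ δₙ` and `Ξ = (0,N)^d`, every bound `C` for the `d`-level block Toeplitz matrix
`T_a` on `ℓ²({0,…,N−1}^d)` also bounds `Θ_{f,Ξ}` on `L²(Ξ)`; i.e. `‖Θ_{f,Ξ}‖ ≤ ‖T_a‖`. -/
theorem stmt14 {d N : ℕ} (hN : 0 < N) (a : (Fin d → ℤ) → ℂ)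
    (ha : ∀ n, a n ≠ 0 → ∀ i, |n i| < (N : ℤ))
    (f : (Ed d → ℂ) → ℂ)
    (hf : ∀ φ : Ed d → ℂ, f φ = ∑' n : Fin d → ℤ, a n * φ (latZ n))
    (C : ℝ) (hC0 : 0 ≤ C)
    (hC : ∀ v : (Fin d → Fin N) → ℂ,
      ∑ m : Fin d → Fin N,
          ‖∑ n : Fin d → Fin N, a (fun i => (m i : ℤ) - (n i : ℤ)) * v n‖ ^ 2 ≤
        C ^ 2 * ∑ n : Fin d → Fin N, ‖v n‖ ^ 2) :
    ThetaNorm f {x : Ed d | ∀ i, 0 < x i ∧ x i < N} ≤ ENNReal.ofReal C := by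
  set Ξ : Set (Ed d) := {x : Ed d | ∀ i, 0 < x i ∧ x i < N} with hΞ
  -- helper facts
  have hev : ∀ i : Fin d, Measurable fun x : Ed d => x i := fun i =>
    (EuclideanSpace.proj i).continuous.measurable
  have hmeasbox : ∀ (S : Fin d → Set ℝ), (∀ i, MeasurableSet (S i)) →
      MeasurableSet {x : Ed d | ∀ i, x i ∈ S i} := by
    intro S hS
    have h : {x : Ed d | ∀ i, x i ∈ S i} = ⋂ i, (fun x : Ed d => x i) ⁻¹' (S i) := by
      ext x; simp
    rw [h]
    exact MeasurableSet.iInter fun i => (hev i) (hS i)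
  set U : Set (Ed d) := {r : Ed d | ∀ i, r i ∈ Ico (0:ℝ) 1} with hU
  set Q : Set (Ed d) := {x : Ed d | ∀ i, x i ∈ Ico (0:ℝ) N} with hQ
  set B : (Fin d → Fin N) → Set (Ed d) :=
    fun m => {x : Ed d | ∀ i, x i ∈ Ico ((m i : ℕ) : ℝ) (((m i : ℕ) : ℝ) + 1)} with hB
  set lat : (Fin d → Fin N) → Ed d := fun m => latZ (fun i => ((m i : ℕ) : ℤ)) with hlat
  have hlatapp : ∀ (m : Fin d → Fin N) (i : Fin d), lat m i = ((m i : ℕ) : ℝ) := fun m i => by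
    simp [hlat, latZ]
  have hmeasU : MeasurableSet U := hmeasbox _ fun i => measurableSet_Ico
  -- measures of Ξ and Q
  have hμΞ : volume Ξ = ENNReal.ofReal N ^ d := by
    have hpre : (MeasurableEquiv.toLp 2 (Fin d → ℝ)).symm ⁻¹'
        (Set.pi univ fun _ : Fin d => Ioo (0:ℝ) N) = Ξ := by
      ext x; simp [Set.mem_pi, hΞ]
    rw [← hpre, (EuclideanSpace.volume_preserving_symm_measurableEquiv_toLp (Fin d)).measure_preimage
      (MeasurableSet.univ_pi fun _ => measurableSet_Ioo).nullMeasurableSet, volume_pi_pi]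
    simp
  have hμQ : volume Q = ENNReal.ofReal N ^ d := by
    have hpre : (MeasurableEquiv.toLp 2 (Fin d → ℝ)).symm ⁻¹'
        (Set.pi univ fun _ : Fin d => Ico (0:ℝ) N) = Q := by
      ext x; simp [Set.mem_pi, hQ]
    rw [← hpre, (EuclideanSpace.volume_preserving_symm_measurableEquiv_toLp (Fin d)).measure_preimage
      (MeasurableSet.univ_pi fun _ => measurableSet_Ico).nullMeasurableSet, volume_pi_pi]
    simp
  have hΞQ : Ξ ⊆ Q := by
    intro x hx i
    exact mem_Ico.mpr ⟨le_of_lt (hx i).1, (hx i).2⟩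
  have hmΞ : MeasurableSet Ξ := by
    have h : Ξ = {x : Ed d | ∀ i, x i ∈ Ioo (0:ℝ) N} := by ext x; simp [hΞ]
    rw [h]; exact hmeasbox _ fun i => measurableSet_Ioo
  have hnull : volume (Q \ Ξ) = 0 := by
    rw [measure_diff hΞQ hmΞ.nullMeasurableSet
      (by rw [hμΞ]; exact ENNReal.pow_ne_top ENNReal.ofReal_ne_top), hμΞ, hμQ, tsub_self]
  have hae : Ξ =ᵐ[volume] Q := by
    rw [MeasureTheory.ae_eq_set]
    constructor
    · rw [Set.diff_eq_empty.mpr hΞQ]; exact measure_empty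
    · exact hnull
  -- cube decomposition
  have hQunion : Q = ⋃ m : Fin d → Fin N, B m := by
    ext x
    simp only [hQ, hB, mem_setOf_eq, mem_iUnion, mem_Ico]
    constructor
    · intro hx
      have hfl : ∀ i, (0:ℤ) ≤ ⌊x i⌋ ∧ ⌊x i⌋ < N := by
        intro i
        refine ⟨Int.floor_nonneg.mpr (hx i).1, ?_⟩
        rw [Int.floor_lt]
        exact_mod_cast (hx i).2
      refine ⟨fun i => ⟨(⌊x i⌋).toNat, by have := hfl i; omega⟩, fun i => ?_⟩
      have h0 := (hfl i).1
      have hcast : (((⌊x i⌋).toNat : ℕ) : ℝ) = ((⌊x i⌋ : ℤ) : ℝ) := by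
        exact_mod_cast congrArg (fun z : ℤ => (z : ℝ)) (Int.toNat_of_nonneg h0)
      constructor
      · rw [hcast]; exact Int.floor_le _
      · rw [hcast]; exact Int.lt_floor_add_one _
    · rintro ⟨m, hm⟩ i
      have h1 := (hm i).1
      have h2 := (hm i).2
      have hlt : ((m i : ℕ) : ℝ) + 1 ≤ (N : ℝ) := by
        have : (m i : ℕ) + 1 ≤ N := (m i).is_lt
        exact_mod_cast this
      constructor
      · have : (0:ℝ) ≤ ((m i : ℕ) : ℝ) := Nat.cast_nonneg _
        linarith
      · linarith
  have hdisj : Pairwise (Function.onFun Disjoint B) := by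
    intro m m' hne
    rw [Function.onFun, Set.disjoint_left]
    intro x hxm hxm'
    apply hne
    funext i
    have h1 := mem_Ico.mp (hxm i)
    have h2 := mem_Ico.mp (hxm' i)
    have e1 : ((m i : ℕ) : ℝ) < ((m' i : ℕ) : ℝ) + 1 := lt_of_le_of_lt h1.1 h2.2
    have e2 : ((m' i : ℕ) : ℝ) < ((m i : ℕ) : ℝ) + 1 := lt_of_le_of_lt h2.1 h1.2
    have e1' : (m i : ℕ) < (m' i : ℕ) + 1 := by exact_mod_cast e1
    have e2' : (m' i : ℕ) < (m i : ℕ) + 1 := by exact_mod_cast e2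
    exact Fin.ext (by omega)
  have hmB : ∀ m, MeasurableSet (B m) := fun m => hmeasbox _ fun i => measurableSet_Ico
  have hkey : ∀ F : Ed d → ℝ≥0∞, Measurable F →
      ∫⁻ x in Ξ, F x = ∫⁻ r in U, ∑ m : Fin d → Fin N, F (lat m + r) := by
    intro F hF
    have hBm : ∀ m : Fin d → Fin N, ∫⁻ x in B m, F x = ∫⁻ r in U, F (lat m + r) := by
      intro m
      have hpre : (fun r : Ed d => lat m + r) ⁻¹' (B m) = U := by
        ext r
        simp only [mem_preimage, hB, hU, mem_setOf_eq, mem_Ico]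
        constructor <;> intro h i <;> have hi := h i <;>
          rw [show (lat m + r) i = lat m i + r i from rfl, hlatapp] at * <;>
          constructor <;> linarith [hi.1, hi.2]
      rw [← hpre]
      exact ((measurePreserving_add_left volume (lat m)).setLIntegral_comp_preimage_emb
        (MeasurableEquiv.addLeft (lat m)).measurableEmbedding F (B m)).symm
    rw [setLIntegral_congr hae, hQunion, lintegral_iUnion hmB hdisj, tsum_fintype]
    simp_rw [hBm]
    exact (lintegral_finset_sum _ (fun m _ => hF.comp (measurable_const_add (lat m)))).symm
  -- membership in the defining set
  apply sInf_le
  intro g hg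
  obtain ⟨hgsmooth, -, hgsupp⟩ := hg
  have hgc : Continuous g := hgsmooth.continuous
  have hg0 : ∀ y : Ed d, y ∉ Ξ → g y = 0 := fun y hy =>
    image_eq_zero_of_notMem_tsupport (fun h => hy (hgsupp h))
  set s : Finset (Fin d → ℤ) := Fintype.piFinset (fun _ => Finset.Ioo (-(N:ℤ)) N) with hs
  have ha0 : ∀ n ∉ s, a n = 0 := by
    intro n hn
    by_contra h
    apply hn
    rw [hs, Fintype.mem_piFinset]
    intro i
    rw [Finset.mem_Ioo]
    exact abs_lt.mp (ha n h i)
  set G : Ed d → ℂ := fun x => ∑ n ∈ s, a n * g (x - latZ n) with hG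
  have hTheta : ∀ x, Theta f g x = G x := by
    intro x
    rw [Theta, hf]
    exact tsum_eq_sum (fun n hn => by rw [ha0 n hn, zero_mul])
  have hGc : Continuous G := continuous_finset_sum _ fun n _ =>
    continuous_const.mul (hgc.comp (continuous_id.sub continuous_const))
  have hF1 : Measurable fun x : Ed d => (‖G x‖₊ : ℝ≥0∞) ^ 2 :=
    hGc.measurable.nnnorm.coe_nnreal_ennreal.pow_const 2
  have hF2 : Measurable fun x : Ed d => (‖g x‖₊ : ℝ≥0∞) ^ 2 :=
    hgc.measurable.nnnorm.coe_nnreal_ennreal.pow_const 2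
  have hsq1 : sqInt Ξ (Theta f g) =
      ∫⁻ r in U, ∑ m : Fin d → Fin N, (‖G (lat m + r)‖₊ : ℝ≥0∞) ^ 2 := by
    have h1 : sqInt Ξ (Theta f g) = ∫⁻ x in Ξ, (‖G x‖₊ : ℝ≥0∞) ^ 2 := by
      simp only [sqInt]
      exact lintegral_congr fun x => by rw [hTheta x]
    rw [h1]
    exact hkey _ hF1
  have hsq2 : sqInt Ξ g = ∫⁻ r in U, ∑ k : Fin d → Fin N, (‖g (lat k + r)‖₊ : ℝ≥0∞) ^ 2 :=
    hkey _ hF2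
  -- the Toeplitz identity on each cube
  have hGm : ∀ r ∈ U, ∀ m : Fin d → Fin N,
      G (lat m + r) = ∑ k : Fin d → Fin N,
        a (fun i => (m i : ℤ) - (k i : ℤ)) * g (lat k + r) := by
    intro r hr m
    have hr' : ∀ i, (0:ℝ) ≤ r i ∧ r i < 1 := fun i => mem_Ico.mp (hr i)
    set e : (Fin d → Fin N) → (Fin d → ℤ) := fun k i => (m i : ℤ) - (k i : ℤ) with he
    have hinj : Function.Injective e := by
      intro k k' h
      funext i
      have h2 := congrFun h i
      simp only [he, sub_right_inj] at h2
      exact Fin.ext (by exact_mod_cast h2)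
    have hmbound : ∀ i, ((m i : ℕ) : ℤ) < N := fun i => by exact_mod_cast (m i).is_lt
    have hsubs : Finset.image e Finset.univ ⊆ s := by
      intro n hn
      rw [Finset.mem_image] at hn
      obtain ⟨k, -, rfl⟩ := hn
      rw [hs, Fintype.mem_piFinset]
      intro i
      rw [Finset.mem_Ioo]
      have h1 := hmbound i
      have h2 : ((k i : ℕ) : ℤ) < N := by exact_mod_cast (k i).is_lt
      simp only [he]
      omega
    have hzero : ∀ n ∈ s, n ∉ Finset.image e Finset.univ →
        a n * g (lat m + r - latZ n) = 0 := by
      intro n _ hn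
      have hni : ∃ i, (m i : ℤ) - n i < 0 ∨ (N : ℤ) ≤ (m i : ℤ) - n i := by
        by_contra hno
        push_neg at hno
        apply hn
        rw [Finset.mem_image]
        refine ⟨fun i => ⟨((m i : ℤ) - n i).toNat, ?_⟩, Finset.mem_univ _, ?_⟩
        · have h1 := (hno i).1
          have h2 := (hno i).2
          omega
        · funext i
          simp only [he]
          have h1 := (hno i).1
          have h2 := (hno i).2
          omega
      obtain ⟨i, hi⟩ := hni
      have hgz : g (lat m + r - latZ n) = 0 := by
        apply hg0
        intro hmem
        have h1 := (hmem i).1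
        have h2 := (hmem i).2
        have hco : (lat m + r - latZ n) i = ((m i : ℕ) : ℝ) + r i - ((n i : ℤ) : ℝ) := by
            rw [PiLp.sub_apply, PiLp.add_apply, hlatapp]; simp [latZ]
        rw [hco] at h1 h2
        rcases hi with hi | hi
        · have hcast : ((m i : ℕ) : ℝ) - ((n i : ℤ) : ℝ) ≤ -1 := by
            have : ((m i : ℕ) : ℤ) - n i ≤ -1 := by omega
            exact_mod_cast this
          linarith [(hr' i).2]
        · have hcast : (N : ℝ) ≤ ((m i : ℕ) : ℝ) - ((n i : ℤ) : ℝ) := by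
            have : (N : ℤ) ≤ ((m i : ℕ) : ℤ) - n i := by omega
            exact_mod_cast this
          linarith [(hr' i).1]
      rw [hgz, mul_zero]
    have harg : ∀ k : Fin d → Fin N, lat m + r - latZ (e k) = lat k + r := by
      intro k
      ext i
      simp only [PiLp.sub_apply, PiLp.add_apply, hlatapp, latZ, he]
      push_cast
      ring
    calc G (lat m + r) = ∑ n ∈ s, a n * g (lat m + r - latZ n) := rfl
      _ = ∑ n ∈ Finset.image e Finset.univ, a n * g (lat m + r - latZ n) :=
          (Finset.sum_subset hsubs hzero).symm
      _ = ∑ k : Fin d → Fin N, a (e k) * g (lat m + r - latZ (e k)) :=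
          Finset.sum_image fun k _ k' _ h => hinj h
      _ = ∑ k : Fin d → Fin N, a (fun i => (m i : ℤ) - (k i : ℤ)) * g (lat k + r) := by
          exact Finset.sum_congr rfl fun k _ => by rw [harg k]
  -- pointwise bound
  have hcoe : ∀ z : ℂ, ((‖z‖₊ : ℝ≥0∞)) ^ 2 = ENNReal.ofReal (‖z‖ ^ 2) := by
    intro z
    rw [← enorm_eq_nnnorm, ← ofReal_norm, ← ENNReal.ofReal_pow (norm_nonneg _)]
  have hpt : ∀ r ∈ U, ∑ m : Fin d → Fin N, (‖G (lat m + r)‖₊ : ℝ≥0∞) ^ 2 ≤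
      ENNReal.ofReal C ^ 2 * ∑ k : Fin d → Fin N, (‖g (lat k + r)‖₊ : ℝ≥0∞) ^ 2 := by
    intro r hr
    have hC' := hC (fun k => g (lat k + r))
    have hGsum : ∑ m : Fin d → Fin N, ‖G (lat m + r)‖ ^ 2 =
        ∑ m : Fin d → Fin N, ‖∑ k : Fin d → Fin N,
          a (fun i => (m i : ℤ) - (k i : ℤ)) * g (lat k + r)‖ ^ 2 :=
      Finset.sum_congr rfl fun m _ => by rw [hGm r hr m]
    calc ∑ m : Fin d → Fin N, (‖G (lat m + r)‖₊ : ℝ≥0∞) ^ 2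
        = ENNReal.ofReal (∑ m : Fin d → Fin N, ‖G (lat m + r)‖ ^ 2) := by
          rw [ENNReal.ofReal_sum_of_nonneg (fun m _ => sq_nonneg _)]
          exact Finset.sum_congr rfl fun m _ => hcoe _
      _ ≤ ENNReal.ofReal (C ^ 2 * ∑ k : Fin d → Fin N, ‖g (lat k + r)‖ ^ 2) :=
          ENNReal.ofReal_le_ofReal (by rw [hGsum]; exact hC')
      _ = ENNReal.ofReal C ^ 2 * ∑ k : Fin d → Fin N, (‖g (lat k + r)‖₊ : ℝ≥0∞) ^ 2 := by
          rw [ENNReal.ofReal_mul (by positivity), ENNReal.ofReal_pow hC0,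
            ENNReal.ofReal_sum_of_nonneg (fun k _ => sq_nonneg _)]
          congr 1
          exact Finset.sum_congr rfl fun k _ => (hcoe _).symm
  -- assemble
  rw [hsq1, hsq2]
  calc (∫⁻ r in U, ∑ m : Fin d → Fin N, (‖G (lat m + r)‖₊ : ℝ≥0∞) ^ 2)
      ≤ ∫⁻ r in U, ENNReal.ofReal C ^ 2 *
          ∑ k : Fin d → Fin N, (‖g (lat k + r)‖₊ : ℝ≥0∞) ^ 2 :=
        setLIntegral_mono' hmeasU hpt
    _ = ENNReal.ofReal C ^ 2 *
          ∫⁻ r in U, ∑ k : Fin d → Fin N, (‖g (lat k + r)‖₊ : ℝ≥0∞) ^ 2 :=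
        lintegral_const_mul' _ _ (ENNReal.pow_ne_top ENNReal.ofReal_ne_top)
end
end
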